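/- For the depolarizing channel N(ρ) = (1−ε)ρ + ε (Tr ρ) I/d with ε ≤ d/(d+1), the 'do nothing' protocol (no measurement, no correction) achieves average fidelity F̄_DN = 1 − ε(d−1)/d, and this is optimal among all ex-ante/ex-post protocols; for ε ≥ d/(d+1), the discriminate-and-reprepare protocol achieving F̄ = 2/(d+1) is optimal. -/

import Mathlib

open Matrix ComplexOrder

/-- `id_n ⊗ Φ` acting on matrices over `Fin n × Fin d`. -/
noncomputable def applyBlocks {d : ℕ} (n : ℕ)
    (Φ : Matrix (Fin d) (Fin d) ℂ →ₗ[ℂ] Matrix (Fin d) (Fin d) ℂ)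
    (M : Matrix (Fin n × Fin d) (Fin n × Fin d) ℂ) :
    Matrix (Fin n × Fin d) (Fin n × Fin d) ℂ :=
  Matrix.of fun p q => Φ (Matrix.of fun i j => M (p.1, i) (q.1, j)) p.2 q.2

/-- Complete positivity. -/
def IsCP {d : ℕ}
    (Φ : Matrix (Fin d) (Fin d) ℂ →ₗ[ℂ] Matrix (Fin d) (Fin d) ℂ) : Prop :=
  ∀ (n : ℕ) (M : Matrix (Fin n × Fin d) (Fin n × Fin d) ℂ),
    M.PosSemidef → (applyBlocks n Φ M).PosSemidef

/-- Trace preservation. -/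
def IsTP {d : ℕ}
    (Φ : Matrix (Fin d) (Fin d) ℂ →ₗ[ℂ] Matrix (Fin d) (Fin d) ℂ) : Prop :=
  ∀ X, (Φ X).trace = X.trace

/-- An ex-ante/ex-post protocol: a CP instrument `{I_ω}` and TPCP maps `C_ω`. -/
def IsProtocol {d m : ℕ}
    (I C : Fin m → (Matrix (Fin d) (Fin d) ℂ →ₗ[ℂ] Matrix (Fin d) (Fin d) ℂ)) : Prop :=
  (∀ ω, IsCP (I ω)) ∧ (∀ X, ∑ ω, ((I ω) X).trace = X.trace) ∧
    (∀ ω, IsCP (C ω) ∧ IsTP (C ω))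

/-- Average fidelity `F̄ = (d + Σ_ω Tr_HS (C_ω ∘ N ∘ I_ω))/(d(d+1))`. -/
noncomputable def avgFid {d : ℕ}
    (N : Matrix (Fin d) (Fin d) ℂ →ₗ[ℂ] Matrix (Fin d) (Fin d) ℂ) {m : ℕ}
    (I C : Fin m → (Matrix (Fin d) (Fin d) ℂ →ₗ[ℂ] Matrix (Fin d) (Fin d) ℂ)) : ℝ :=
  ((d : ℝ) + ∑ ω, (LinearMap.trace ℂ (Matrix (Fin d) (Fin d) ℂ)
      ((C ω) ∘ₗ N ∘ₗ (I ω))).re) / (d * (d + 1))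

/-- The depolarizing channel `N(ρ) = (1−ε)ρ + (ε/d)(Tr ρ) I`. -/
noncomputable def depol (d : ℕ) (ε : ℝ) :
    Matrix (Fin d) (Fin d) ℂ →ₗ[ℂ] Matrix (Fin d) (Fin d) ℂ :=
  ((1 - ε : ℝ) : ℂ) • LinearMap.id +
    ((ε : ℂ) / d) • (Matrix.traceLinearMap (Fin d) ℂ ℂ).smulRight 1

/-- The discriminate-and-reprepare protocol in the standard basis:
    `I_ω(ρ) = |ω⟩⟨ω| ρ |ω⟩⟨ω|`, `C_ω(ρ) = (Tr ρ)|ω⟩⟨ω|`. -/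
noncomputable def drInstr (d : ℕ) (ω : Fin d) :
    Matrix (Fin d) (Fin d) ℂ →ₗ[ℂ] Matrix (Fin d) (Fin d) ℂ :=
  (LinearMap.mulLeft ℂ (Matrix.single ω ω (1 : ℂ))).comp
    (LinearMap.mulRight ℂ (Matrix.single ω ω (1 : ℂ)))

noncomputable def drCorr (d : ℕ) (ω : Fin d) :
    Matrix (Fin d) (Fin d) ℂ →ₗ[ℂ] Matrix (Fin d) (Fin d) ℂ :=
  (Matrix.traceLinearMap (Fin d) ℂ ℂ).smulRight (Matrix.single ω ω (1 : ℂ))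

/-!
The average fidelity is affine in the noise, so a protocol's fidelity against `depol d ε` is
controlled by its values at `ε = 0` and `ε = d/(d+1)`. At `ε = 0`, complete positivity of
`C ∘ I` bounds its Hilbert–Schmidt trace by `d` times the trace of its Choi matrix, giving
`F̄ ≤ 1`. For `ε ≥ d/(d+1)` the partially transposed Choi matrix of the noise,
`(1 - ε) S + (ε/d) 1` with `S` the swap, is positive semidefinite; this property survives
precomposition with the CP map `I`, and then feeding it through `id ⊗ C` and pairing with `S`
bounds the Hilbert–Schmidt trace of `C ∘ N ∘ I` by the trace of its Choi matrix, giving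
`F̄ ≤ 2/(d+1)`. Both bounds come from `2 Re Z p q ≤ Z p p + Z q q` for a positive semidefinite
`Z`.
-/

local notation "𝕄" d:max => Matrix (Fin d) (Fin d) ℂ

namespace Matrix.PosSemidef

variable {𝕜 : Type*} [RCLike 𝕜] {n : Type*} [Fintype n] [DecidableEq n]

open RCLike

theorem two_mul_re_apply_le {Z : Matrix n n 𝕜} (hZ : Z.PosSemidef) (p q : n) :
    2 * re (Z p q) ≤ re (Z p p) + re (Z q q) := by
  have h := hZ.dotProduct_mulVec_nonneg (Pi.single p 1 - Pi.single q 1)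
  simp only [star_sub, Pi.star_single, star_one, mulVec_sub, dotProduct_sub, sub_dotProduct,
    mulVec_single_one, single_one_dotProduct, col_apply] at h
  rw [← hZ.1.apply q p] at h
  have := (RCLike.nonneg_iff.mp h).1
  simp only [map_sub, RCLike.star_def, RCLike.conj_re] at this
  linarith

theorem re_sum_apply_perm_le {Z : Matrix n n 𝕜} (hZ : Z.PosSemidef) (σ : Equiv.Perm n) :
    re (∑ p, Z p (σ p)) ≤ re Z.trace := by
  have h2 : 2 * re (∑ p, Z p (σ p)) ≤ 2 * re Z.trace := by
    calc 2 * re (∑ p, Z p (σ p)) = ∑ p, 2 * re (Z p (σ p)) := by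
          rw [map_sum, Finset.mul_sum]
      _ ≤ ∑ p, (re (Z p p) + re (Z (σ p) (σ p))) :=
          Finset.sum_le_sum fun p _ => hZ.two_mul_re_apply_le p (σ p)
      _ = 2 * re Z.trace := by
          rw [Finset.sum_add_distrib, Equiv.sum_comp σ (fun p => re (Z p p)), trace, map_sum]
          simp only [diag_apply]; ring
  linarith

theorem re_sum_apply_diag_le {Z : Matrix (n × n) (n × n) 𝕜} (hZ : Z.PosSemidef) :
    re (∑ a, ∑ b, Z (a, a) (b, b)) ≤ Fintype.card n * re Z.trace := by
  have hdiag : ∑ a, re (Z (a, a) (a, a)) ≤ re Z.trace := by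
    rw [trace, map_sum, Fintype.sum_prod_type]
    exact Finset.sum_le_sum fun a _ => Finset.single_le_sum
      (f := fun b => re (Z (a, b) (a, b)))
      (fun b _ => (RCLike.nonneg_iff.mp hZ.diag_nonneg).1) (Finset.mem_univ a)
  have h2 : 2 * re (∑ a, ∑ b, Z (a, a) (b, b)) ≤
      2 * (Fintype.card n * ∑ a, re (Z (a, a) (a, a))) := by
    calc 2 * re (∑ a, ∑ b, Z (a, a) (b, b)) = ∑ a, ∑ b, 2 * re (Z (a, a) (b, b)) := by
          simp only [map_sum, Finset.mul_sum]
      _ ≤ ∑ a, ∑ b, (re (Z (a, a) (a, a)) + re (Z (b, b) (b, b))) :=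
          Finset.sum_le_sum fun a _ => Finset.sum_le_sum fun b _ => hZ.two_mul_re_apply_le _ _
      _ = 2 * (Fintype.card n * ∑ a, re (Z (a, a) (a, a))) := by
          simp only [Finset.sum_add_distrib, Finset.sum_const, Finset.card_univ, nsmul_eq_mul,
            ← Finset.mul_sum]
          ring
  nlinarith [hdiag, (Fintype.card n).cast_nonneg (α := ℝ)]

end Matrix.PosSemidef

section LinkProduct

variable {𝕜 : Type*} [RCLike 𝕜] {α β γ : Type*} [Fintype α] [Fintype β] [Fintype γ]
  [DecidableEq α] [DecidableEq β] [DecidableEq γ]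

def linkProduct (A : Matrix (α × β) (α × β) 𝕜) (G : Matrix (β × γ) (β × γ) 𝕜) :
    Matrix (α × γ) (α × γ) 𝕜 :=
  of fun p q => ∑ c, ∑ e, A (p.1, c) (q.1, e) * G (c, p.2) (e, q.2)

theorem Matrix.PosSemidef.linkProduct {A : Matrix (α × β) (α × β) 𝕜}
    {G : Matrix (β × γ) (β × γ) 𝕜} (hA : A.PosSemidef) (hG : G.PosSemidef) :
    (linkProduct A G).PosSemidef := by
  let M : Matrix ((α × β) × (β × γ)) (α × γ) 𝕜 :=
    of fun P q => if P.1.1 = q.1 ∧ P.1.2 = P.2.1 ∧ P.2.2 = q.2 then 1 else 0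
  convert (hA.kronecker hG).conjTranspose_mul_mul_same M using 1
  ext p q
  simp [M, _root_.linkProduct, mul_apply, Fintype.sum_prod_type, ite_and,
    apply_ite (starRingEnd 𝕜), ite_mul]
  exact Finset.sum_comm

end LinkProduct

section Swap

variable (𝕜 : Type*) [RCLike 𝕜] (n : Type*) [DecidableEq n]

def swapMatrix : Matrix (n × n) (n × n) 𝕜 := Equiv.Perm.permMatrix 𝕜 (Equiv.prodComm n n)

variable {𝕜 n}

theorem swapMatrix_apply (p q : n × n) : swapMatrix 𝕜 n p q = if q = p.swap then 1 else 0 := by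
  simp [swapMatrix, Equiv.Perm.permMatrix, PEquiv.toMatrix_apply, Equiv.toPEquiv_apply, eq_comm]

theorem posSemidef_one_add_swapMatrix [Fintype n] : (1 + swapMatrix 𝕜 n).PosSemidef := by
  have hsq : swapMatrix 𝕜 n * swapMatrix 𝕜 n = 1 := by
    rw [swapMatrix, ← Matrix.permMatrix_mul, show Equiv.prodComm n n * Equiv.prodComm n n = 1 by
      ext <;> rfl, Matrix.permMatrix_one]
  have hH : (swapMatrix 𝕜 n)ᴴ = swapMatrix 𝕜 n := by
    rw [swapMatrix, Matrix.conjTranspose_permMatrix]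
    congr 1
  have h : 1 + swapMatrix 𝕜 n = (2⁻¹ : ℝ) • ((1 + swapMatrix 𝕜 n)ᴴ * (1 + swapMatrix 𝕜 n)) := by
    rw [conjTranspose_add, conjTranspose_one, hH, add_mul, mul_add, mul_add, hsq, one_mul, one_mul,
      mul_one]
    module
  rw [h]
  exact (posSemidef_conjTranspose_mul_self _).smul (by norm_num)

end Swap

section Choi

variable {d : ℕ}

theorem LinearMap.apply_eq_sum_single (Ψ : 𝕄 d →ₗ[ℂ] 𝕄 d) (X : 𝕄 d) (i j : Fin d) :
    Ψ X i j = ∑ a, ∑ b, X a b * Ψ (Matrix.single a b 1) i j := by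
  conv_lhs => rw [matrix_eq_sum_single X]
  simp only [map_sum, Matrix.sum_apply]
  congr! 2 with a _ b _
  rw [show Matrix.single a b (X a b) = X a b • Matrix.single a b 1 by
    rw [smul_single, smul_eq_mul, mul_one], map_smul, Matrix.smul_apply, smul_eq_mul]

theorem LinearMap.trace_eq_sum_single (Φ : 𝕄 d →ₗ[ℂ] 𝕄 d) :
    LinearMap.trace ℂ (𝕄 d) Φ = ∑ a, ∑ b, Φ (Matrix.single a b 1) a b := by
  rw [LinearMap.trace_eq_matrix_trace ℂ (Matrix.stdBasis ℂ (Fin d) (Fin d)), Matrix.trace,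
    Fintype.sum_prod_type]
  simp only [diag_apply, LinearMap.toMatrix_apply, Matrix.stdBasis_eq_single]
  simp [Matrix.stdBasis]

def choi (Φ : 𝕄 d →ₗ[ℂ] 𝕄 d) : Matrix (Fin d × Fin d) (Fin d × Fin d) ℂ :=
  of fun p q => Φ (single p.1 q.1 1) p.2 q.2

/-- The partial transpose `(T ⊗ id)(choi Φ)`, usually written `(choi Φ)^Γ`. -/
def choiΓ (Φ : 𝕄 d →ₗ[ℂ] 𝕄 d) : Matrix (Fin d × Fin d) (Fin d × Fin d) ℂ :=
  of fun p q => Φ (single q.1 p.1 1) p.2 q.2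

theorem trace_choi (Φ : 𝕄 d →ₗ[ℂ] 𝕄 d) : (choi Φ).trace = ∑ a, (Φ (single a a 1)).trace := by
  rw [trace, Fintype.sum_prod_type]
  rfl

theorem choiΓ_comp (Ψ Φ : 𝕄 d →ₗ[ℂ] 𝕄 d) :
    choiΓ (Ψ ∘ₗ Φ) = linkProduct (choi Φ)ᵀ (choiΓ Ψ) := by
  ext p q
  simp only [choiΓ, choi, linkProduct, of_apply, transpose_apply, LinearMap.comp_apply]
  rw [Ψ.apply_eq_sum_single, Finset.sum_comm]

theorem IsCP.comp {Ψ Φ : 𝕄 d →ₗ[ℂ] 𝕄 d} (hΨ : IsCP Ψ) (hΦ : IsCP Φ) : IsCP (Ψ ∘ₗ Φ) :=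
  fun n M hM => hΨ n _ (hΦ n M hM)

theorem IsCP.posSemidef_choi {Φ : 𝕄 d →ₗ[ℂ] 𝕄 d} (hΦ : IsCP Φ) : (choi Φ).PosSemidef := by
  classical
  let Ω : Fin d × Fin d → ℂ := fun p => if p.1 = p.2 then 1 else 0
  have hblock : ∀ a b, (of fun i j => vecMulVec Ω (star Ω) (a, i) (b, j)) = single a b 1 := by
    intro a b
    ext i j
    simp only [Ω, vecMulVec_apply, single_apply, of_apply]
    split_ifs <;> simp_all
  convert hΦ d _ (posSemidef_vecMulVec_self_star Ω) using 1
  ext p q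
  simp only [choi, applyBlocks, of_apply, hblock]

theorem IsCP.posSemidef_choiΓ_comp {Ψ Φ : 𝕄 d →ₗ[ℂ] 𝕄 d} (hΦ : IsCP Φ)
    (hΨ : (choiΓ Ψ).PosSemidef) : (choiΓ (Ψ ∘ₗ Φ)).PosSemidef := by
  rw [choiΓ_comp]
  exact hΦ.posSemidef_choi.transpose.linkProduct hΨ

theorem IsCP.re_trace_le {Φ : 𝕄 d →ₗ[ℂ] 𝕄 d} (hΦ : IsCP Φ) :
    (LinearMap.trace ℂ (𝕄 d) Φ).re ≤ d * (∑ a, (Φ (single a a 1)).trace).re := by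
  have h := hΦ.posSemidef_choi.re_sum_apply_diag_le
  rw [Fintype.card_fin, trace_choi] at h
  rwa [LinearMap.trace_eq_sum_single]

theorem IsCP.re_trace_comp_le {C Φ : 𝕄 d →ₗ[ℂ] 𝕄 d} (hC : IsCP C) (hΦ : (choiΓ Φ).PosSemidef) :
    (LinearMap.trace ℂ (𝕄 d) (C ∘ₗ Φ)).re ≤ (∑ a, (C (Φ (single a a 1))).trace).re := by
  -- the swap-diagonal of `(id ⊗ C)(choiΓ Φ)` sums to the Hilbert–Schmidt trace of `C ∘ Φ`
  have h := (hC d _ hΦ).re_sum_apply_perm_le (Equiv.prodComm (Fin d) (Fin d))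
  rw [Fintype.sum_prod_type, Finset.sum_comm, trace, Fintype.sum_prod_type] at h
  rw [LinearMap.trace_eq_sum_single]
  exact h

end Choi

section Depolarizing

variable {d : ℕ}

theorem depol_apply (ε : ℝ) (X : 𝕄 d) :
    depol d ε X = ((1 - ε : ℝ) : ℂ) • X + ((ε : ℂ) / d) • (X.trace • 1) := by
  simp [depol]

theorem isTP_depol (hd : d ≠ 0) (ε : ℝ) : IsTP (depol d ε) := by
  intro X
  simp [depol_apply, trace_smul]
  field_simp
  ring

theorem depol_zero : depol d 0 = LinearMap.id := by
  ext X : 1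
  simp [depol_apply]

theorem depol_convexComb (t ε₀ ε₁ : ℝ) :
    depol d ((1 - t) * ε₀ + t * ε₁) =
      ((1 - t : ℝ) : ℂ) • depol d ε₀ + ((t : ℝ) : ℂ) • depol d ε₁ := by
  simp only [depol]
  push_cast
  module

theorem choiΓ_depol (ε : ℝ) :
    choiΓ (depol d ε) = ((1 - ε : ℝ) : ℂ) • swapMatrix ℂ (Fin d) + ((ε : ℂ) / d) • 1 := by
  ext ⟨c, i⟩ ⟨e, j⟩
  rcases eq_or_ne e c with rfl | hec <;>
    simp [choiΓ, depol_apply, single_apply, one_apply, swapMatrix_apply, trace_single_eq_same,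
      trace_single_eq_of_ne, *] <;> grind

theorem posSemidef_choiΓ_depol (hd : 0 < d) {ε : ℝ} (hε : d / (d + 1) ≤ ε) (hε1 : ε ≤ 1) :
    (choiΓ (depol d ε)).PosSemidef := by
  have hd' : (0 : ℝ) < d := by exact_mod_cast hd
  have hcoef : 0 ≤ ε / d - (1 - ε) := by
    rw [div_le_iff₀ (by positivity)] at hε
    rw [sub_nonneg, le_div_iff₀ hd']
    linarith
  have h : choiΓ (depol d ε) = ((1 - ε : ℝ) : ℂ) • (1 + swapMatrix ℂ (Fin d))
      + ((ε / d - (1 - ε) : ℝ) : ℂ) • 1 := by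
    rw [choiΓ_depol]
    push_cast
    module
  rw [h]
  exact (posSemidef_one_add_swapMatrix.smul (Complex.zero_le_real.mpr (by linarith))).add
    (PosSemidef.one.smul (Complex.zero_le_real.mpr hcoef))

end Depolarizing

section Protocol

variable {d m : ℕ}

theorem avgFid_convexComb (N₀ N₁ : 𝕄 d →ₗ[ℂ] 𝕄 d) (I C : Fin m → (𝕄 d →ₗ[ℂ] 𝕄 d)) (t : ℝ) :
    avgFid (((1 - t : ℝ) : ℂ) • N₀ + ((t : ℝ) : ℂ) • N₁) I C =
      (1 - t) * avgFid N₀ I C + t * avgFid N₁ I C := by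
  simp only [avgFid, LinearMap.comp_add, LinearMap.add_comp, LinearMap.comp_smul,
    LinearMap.smul_comp, map_add, map_smul, Complex.add_re, smul_eq_mul, Complex.re_ofReal_mul,
    Finset.sum_add_distrib, ← Finset.mul_sum]
  ring

theorem avgFid_depol_doNothing (hd : 0 < d) (ε : ℝ) :
    avgFid (depol d ε) (fun _ : Fin 1 => LinearMap.id) (fun _ => LinearMap.id)
      = 1 - ε * (d - 1) / d := by
  have htr : LinearMap.trace ℂ (𝕄 d) (depol d ε) = (((1 - ε) * d ^ 2 + ε : ℝ) : ℂ) := by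
    simp [depol, LinearMap.trace_id, Module.finrank_matrix]
    field_simp
  have hd' : (0 : ℝ) < d := by exact_mod_cast hd
  simp only [avgFid, Fin.sum_univ_one, LinearMap.id_comp, LinearMap.comp_id, htr,
    Complex.ofReal_re]
  field_simp
  ring

theorem avgFid_depol_discriminateReprepare (hd : 0 < d) (ε : ℝ) :
    avgFid (depol d ε) (drInstr d) (drCorr d) = 2 / (d + 1) := by
  have hcomp : ∀ ω, drCorr d ω ∘ₗ depol d ε ∘ₗ drInstr d ω =
      ((traceLinearMap (Fin d) ℂ ℂ) ∘ₗ drInstr d ω).smulRight (single ω ω 1) := by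
    intro ω
    ext X : 1
    simp [drCorr, isTP_depol hd.ne' ε _]
  have hd' : (0 : ℝ) < d := by exact_mod_cast hd
  simp only [avgFid, hcomp, LinearMap.trace_smulRight]
  simp [drInstr, single_mul_single_same, trace_single_eq_same]
  field_simp
  ring

variable {I C : Fin m → (𝕄 d →ₗ[ℂ] 𝕄 d)} {N : 𝕄 d →ₗ[ℂ] 𝕄 d}

theorem IsProtocol.sum_trace_single (hP : IsProtocol I C) (hN : IsTP N) :
    ∑ ω, ∑ a, (C ω (N (I ω (single a a 1)))).trace = d := by
  obtain ⟨-, hI, hC⟩ := hP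
  simp only [(hC _).2 _, hN _]
  rw [Finset.sum_comm]
  simp [hI, trace_single_eq_same]

theorem IsProtocol.avgFid_le_of_re_trace_le (hd : 0 < d) (hP : IsProtocol I C) (hN : IsTP N)
    {κ : ℝ}
    (h : ∀ ω, (LinearMap.trace ℂ (𝕄 d) (C ω ∘ₗ N ∘ₗ I ω)).re ≤
      κ * (∑ a, (C ω (N (I ω (single a a 1)))).trace).re) :
    avgFid N I C ≤ (1 + κ) / (d + 1) := by
  have hsum : ∑ ω, (LinearMap.trace ℂ (𝕄 d) (C ω ∘ₗ N ∘ₗ I ω)).re ≤ κ * d :=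
    calc _ ≤ ∑ ω, κ * (∑ a, (C ω (N (I ω (single a a 1)))).trace).re :=
          Finset.sum_le_sum fun ω _ => h ω
      _ = κ * d := by
          rw [← Finset.mul_sum, ← Complex.re_sum, hP.sum_trace_single hN, Complex.natCast_re]
  have hd' : (0 : ℝ) < d := by exact_mod_cast hd
  rw [avgFid, div_le_div_iff₀ (by positivity) (by positivity)]
  nlinarith

theorem IsProtocol.avgFid_id_le_one (hd : 0 < d) (hP : IsProtocol I C) :
    avgFid LinearMap.id I C ≤ 1 := by
  have h := hP.avgFid_le_of_re_trace_le (N := LinearMap.id) hd (fun _ => rfl) (κ := d) fun ω => by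
    simpa using ((hP.2.2 ω).1.comp (hP.1 ω)).re_trace_le
  rwa [add_comm, div_self (by positivity)] at h

theorem IsProtocol.avgFid_le_of_posSemidef_choiΓ (hd : 0 < d) (hP : IsProtocol I C)
    (hN : IsTP N) (hNΓ : (choiΓ N).PosSemidef) : avgFid N I C ≤ 2 / (d + 1) := by
  have h := hP.avgFid_le_of_re_trace_le hd hN (κ := 1) fun ω => by
    simpa using (hP.2.2 ω).1.re_trace_comp_le ((hP.1 ω).posSemidef_choiΓ_comp hNΓ)
  rwa [one_add_one_eq_two] at h

theorem IsProtocol.avgFid_depol_le (hd : 0 < d) (hP : IsProtocol I C) {ε : ℝ} (hε0 : 0 ≤ ε)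
    (hε : ε ≤ d / (d + 1)) : avgFid (depol d ε) I C ≤ 1 - ε * (d - 1) / d := by
  have hd' : (0 : ℝ) < d := by exact_mod_cast hd
  obtain ⟨t, ht⟩ : ∃ t : ℝ, t = ε * (d + 1) / d := ⟨_, rfl⟩
  have ht0 : 0 ≤ t := by rw [ht]; positivity
  have ht1 : t ≤ 1 := by rwa [ht, div_le_one hd', ← le_div_iff₀ (by positivity)]
  have hdepol :
      depol d ε = ((1 - t : ℝ) : ℂ) • depol d 0 + ((t : ℝ) : ℂ) • depol d (d / (d + 1)) := by
    rw [← depol_convexComb]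
    congr 1
    rw [ht]
    field_simp
    ring
  have h0 := hP.avgFid_id_le_one hd
  have h1 := hP.avgFid_le_of_posSemidef_choiΓ hd (isTP_depol hd.ne' _)
    (posSemidef_choiΓ_depol hd le_rfl (div_le_one_of_le₀ (by linarith) (by positivity)))
  rw [hdepol, avgFid_convexComb, depol_zero]
  calc (1 - t) * avgFid LinearMap.id I C + t * avgFid (depol d (d / (d + 1))) I C
      ≤ (1 - t) * 1 + t * (2 / (d + 1)) := by gcongr
    _ = 1 - ε * (d - 1) / d := by
      rw [ht]
      field_simp
      ring

end Protocol

/-- optimal suppression of the depolarizing noise.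
    (i) For `ε ≤ d/(d+1)` the do-nothing protocol (one outcome, `I = C = id`)
    achieves average fidelity `1 − ε(d−1)/d`, optimally.
    (ii) For `ε ≥ d/(d+1)` every protocol has average fidelity at most
    `2/(d+1)`, and some protocol attains it. -/
theorem stmt7 (d : ℕ) (hd : 1 ≤ d) (ε : ℝ) (hε0 : 0 ≤ ε) (hε1 : ε ≤ 1) :
    (ε ≤ (d : ℝ) / (d + 1) →
      avgFid (depol d ε) (fun _ : Fin 1 => LinearMap.id) (fun _ => LinearMap.id)
          = 1 - ε * (d - 1) / d ∧
      ∀ (m : ℕ) (I C : Fin m → (Matrix (Fin d) (Fin d) ℂ →ₗ[ℂ] Matrix (Fin d) (Fin d) ℂ)),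
        IsProtocol I C → avgFid (depol d ε) I C ≤ 1 - ε * (d - 1) / d) ∧
    ((d : ℝ) / (d + 1) ≤ ε →
      (∀ (m : ℕ) (I C : Fin m → (Matrix (Fin d) (Fin d) ℂ →ₗ[ℂ] Matrix (Fin d) (Fin d) ℂ)),
        IsProtocol I C → avgFid (depol d ε) I C ≤ 2 / ((d : ℝ) + 1)) ∧
      avgFid (depol d ε) (drInstr d) (drCorr d) = 2 / ((d : ℝ) + 1)) := by
  refine ⟨fun hε => ⟨avgFid_depol_doNothing hd ε, fun _ _ _ hP => hP.avgFid_depol_le hd hε0 hε⟩,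
    fun hε => ⟨fun _ _ _ hP => ?_, avgFid_depol_discriminateReprepare hd ε⟩⟩
  exact hP.avgFid_le_of_posSemidef_choiΓ hd (isTP_depol (by omega) ε)
    (posSemidef_choiΓ_depol hd hε hε1)
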